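/- For every polynomial D in Z[x_1,...,x_p] and every commutative ring K extending Z, the equation D(x_1,...,x_p) = 0 has the same number of solutions in K^p as some explicitly constructed system S ⊆ E_n has solutions in K^n (the projection onto the first p coordinates is a bijection between solution sets). -/

import Mathlib

/-- An equation from the set `E_n`: `x_i = 1`, `x_i + x_j = x_k`, or `x_i * x_j = x_k`
with indices in `{1, ..., n}` (here `Fin n`). -/
inductive Eqn (n : ℕ) where
  | one (i : Fin n)
  | add (i j k : Fin n)
  | mul (i j k : Fin n)

/-- The equation holds for an assignment `x` of values in a commutative semiring. -/
def Eqn.Holds {n : ℕ} {K : Type*} [CommSemiring K] (x : Fin n → K) : Eqn n → Prop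
  | .one i => x i = 1
  | .add i j k => x i + x j = x k
  | .mul i j k => x i * x j = x k

/-! Build an arithmetic circuit for `D` from `1`, the `xᵢ`, `+`, `*` and `-`, one fresh unknown
per gate, each with one equation of `E_n` (`z = a - b` is written `b + z = a`). Given the earlier
unknowns, a gate's equation has exactly one solution, the value of the gate, so the solutions of
the system are the tuples of gate values and project bijectively onto `Kᵖ`. The polynomials
computable this way form a subring containing the `xᵢ`, hence all of `ℤ[x₁, …, xₚ]`; finally
`x_o + x_o = x_o` at the output gate `o` imposes `D = 0`. -/

open MvPolynomial

noncomputable section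

namespace Eqn

variable {n m : ℕ}

def map (f : Fin n → Fin m) : Eqn n → Eqn m
  | .one i => .one (f i)
  | .add i j k => .add (f i) (f j) (f k)
  | .mul i j k => .mul (f i) (f j) (f k)

theorem holds_map {K : Type*} [CommSemiring K] (f : Fin n → Fin m) (y : Fin m → K) :
    ∀ e : Eqn n, (e.map f).Holds y ↔ e.Holds (y ∘ f)
  | .one _ | .add _ _ _ | .mul _ _ _ => Iff.rfl

end Eqn

/-- A system as in the paper's lemma: its unknowns beyond the first `p` are uniquely determined
polynomials `val` in the first `p`. -/
structure Presentation (p : ℕ) where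
  n : ℕ
  le : p ≤ n
  eqs : List (Eqn n)
  val : Fin n → MvPolynomial (Fin p) ℤ
  val_castLE : ∀ i, val (Fin.castLE le i) = X i
  holds_iff : ∀ (K : Type) [CommRing K] (y : Fin n → K),
    (∀ eq ∈ eqs, eq.Holds y) ↔ ∃ x : Fin p → K, y = fun i => aeval x (val i)

namespace Presentation

variable {p : ℕ}

def base (p : ℕ) : Presentation p where
  n := p
  le := le_rfl
  eqs := []
  val := X
  val_castLE _ := rfl
  holds_iff _ _ y := iff_of_true (fun _ h => absurd h List.not_mem_nil)
    ⟨y, funext fun i => (aeval_X y i).symm⟩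

variable (P : Presentation p)

def Forces (e : Eqn (P.n + 1)) (v : MvPolynomial (Fin p) ℤ) : Prop :=
  ∀ (K : Type) [CommRing K] (x : Fin p → K) (z : K),
    e.Holds (Fin.snoc (fun i => aeval x (P.val i)) z) ↔ z = aeval x v

def snoc (e : Eqn (P.n + 1)) (v : MvPolynomial (Fin p) ℤ) (he : P.Forces e v) :
    Presentation p where
  n := P.n + 1
  le := P.le.trans P.n.le_succ
  eqs := e :: P.eqs.map (Eqn.map Fin.castSucc)
  val := Fin.snoc P.val v
  val_castLE i := (Fin.snoc_castSucc (i := Fin.castLE P.le i) ..).trans (P.val_castLE i)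
  holds_iff K _ y := by
    obtain ⟨y, z, rfl⟩ : ∃ (y' : Fin P.n → K) (z : K), y = Fin.snoc y' z :=
      ⟨_, _, (Fin.snoc_init_self y).symm⟩
    simp only [List.forall_mem_cons, List.forall_mem_map, Eqn.holds_map, Fin.snoc_comp_castSucc,
      P.holds_iff]
    have hval (x : Fin p → K) :
        (fun i => aeval x (Fin.snoc (α := fun _ => MvPolynomial (Fin p) ℤ) P.val v i)) =
        Fin.snoc (fun i => aeval x (P.val i)) (aeval x v) :=
      Fin.comp_snoc (aeval x) P.val v
    simp only [hval, Fin.snoc_inj]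
    constructor
    · rintro ⟨hez, x, rfl⟩
      exact ⟨x, rfl, (he K x z).1 hez⟩
    · rintro ⟨x, rfl, rfl⟩
      exact ⟨(he K x _).2 rfl, x, rfl⟩

theorem range_val_subset_snoc {e : Eqn (P.n + 1)} {v : MvPolynomial (Fin p) ℤ}
    (he : P.Forces e v) : Set.range P.val ⊆ Set.range (P.snoc e v he).val :=
  fun _ ⟨i, hi⟩ => ⟨i.castSucc, by simpa [snoc] using hi⟩

theorem mem_range_val_snoc {e : Eqn (P.n + 1)} {v : MvPolynomial (Fin p) ℤ}
    (he : P.Forces e v) : v ∈ Set.range (P.snoc e v he).val :=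
  ⟨Fin.last _, by simp [snoc]⟩

def snocOne : Presentation p :=
  P.snoc (.one (Fin.last _)) 1 fun K _ x z => by simp [Eqn.Holds]

def snocAdd (i j : Fin P.n) : Presentation p :=
  P.snoc (.add i.castSucc j.castSucc (Fin.last _)) (P.val i + P.val j) fun K _ x z => by
    simp [Eqn.Holds, eq_comm]

def snocMul (i j : Fin P.n) : Presentation p :=
  P.snoc (.mul i.castSucc j.castSucc (Fin.last _)) (P.val i * P.val j) fun K _ x z => by
    simp [Eqn.Holds, eq_comm]

def snocSub (i j : Fin P.n) : Presentation p :=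
  P.snoc (.add j.castSucc (Fin.last _) i.castSucc) (P.val i - P.val j) fun K _ x z => by
    simp [Eqn.Holds, eq_sub_iff_add_eq']

def Adjoinable (q : MvPolynomial (Fin p) ℤ) : Prop :=
  ∀ P : Presentation p, ∃ P' : Presentation p,
    Set.range P.val ⊆ Set.range P'.val ∧ q ∈ Set.range P'.val

theorem adjoinable_X (i : Fin p) : Adjoinable (X i) :=
  fun P => ⟨P, subset_rfl, _, P.val_castLE i⟩

theorem adjoinable_one : Adjoinable (1 : MvPolynomial (Fin p) ℤ) :=
  fun P => ⟨P.snocOne, P.range_val_subset_snoc _, P.mem_range_val_snoc _⟩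

theorem Adjoinable.binop {op : MvPolynomial (Fin p) ℤ → MvPolynomial (Fin p) ℤ →
      MvPolynomial (Fin p) ℤ}
    (step : ∀ (P : Presentation p) (i j : Fin P.n), ∃ P' : Presentation p,
      Set.range P.val ⊆ Set.range P'.val ∧ op (P.val i) (P.val j) ∈ Set.range P'.val)
    {f g : MvPolynomial (Fin p) ℤ} (hf : Adjoinable f) (hg : Adjoinable g) :
    Adjoinable (op f g) := by
  intro P
  obtain ⟨P₁, h₁, i, rfl⟩ := hf P
  obtain ⟨P₂, h₂, j, rfl⟩ := hg P₁
  obtain ⟨i', hi'⟩ := h₂ ⟨i, rfl⟩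
  obtain ⟨P₃, h₃, hop⟩ := step P₂ i' j
  exact ⟨P₃, h₁.trans (h₂.trans h₃), hi' ▸ hop⟩

theorem Adjoinable.add {f g : MvPolynomial (Fin p) ℤ} :
    Adjoinable f → Adjoinable g → Adjoinable (f + g) :=
  Adjoinable.binop fun P i j =>
    ⟨P.snocAdd i j, P.range_val_subset_snoc _, P.mem_range_val_snoc _⟩

theorem Adjoinable.mul {f g : MvPolynomial (Fin p) ℤ} :
    Adjoinable f → Adjoinable g → Adjoinable (f * g) :=
  Adjoinable.binop fun P i j =>
    ⟨P.snocMul i j, P.range_val_subset_snoc _, P.mem_range_val_snoc _⟩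

theorem Adjoinable.sub {f g : MvPolynomial (Fin p) ℤ} :
    Adjoinable f → Adjoinable g → Adjoinable (f - g) :=
  Adjoinable.binop fun P i j =>
    ⟨P.snocSub i j, P.range_val_subset_snoc _, P.mem_range_val_snoc _⟩

theorem adjoinable_zero : Adjoinable (0 : MvPolynomial (Fin p) ℤ) :=
  sub_self (1 : MvPolynomial (Fin p) ℤ) ▸ adjoinable_one.sub adjoinable_one

def adjoinableSubring (p : ℕ) : Subring (MvPolynomial (Fin p) ℤ) where
  carrier := {q | Adjoinable q}
  one_mem' := adjoinable_one
  mul_mem' := Adjoinable.mul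
  zero_mem' := adjoinable_zero
  add_mem' := Adjoinable.add
  neg_mem' {f} hf := zero_sub f ▸ adjoinable_zero.sub hf

theorem adjoinableSubring_eq_top (p : ℕ) : adjoinableSubring p = ⊤ :=
  eq_top_iff.2 fun q _ => q.induction_on
    (fun a => eq_intCast C a ▸ intCast_mem _ a)
    (fun _ _ => add_mem)
    (fun _ i hf => mul_mem hf (adjoinable_X i))

theorem exists_mem_range_val (D : MvPolynomial (Fin p) ℤ) :
    ∃ P : Presentation p, D ∈ Set.range P.val := by
  have hD : D ∈ adjoinableSubring p := adjoinableSubring_eq_top p ▸ Subring.mem_top D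
  obtain ⟨P, -, hP⟩ := hD (base p)
  exact ⟨P, hP⟩

theorem eval_castLE {K : Type*} [CommRing K] (x : Fin p → K) :
    (fun j => aeval x (P.val (Fin.castLE P.le j))) = x :=
  funext fun j => by rw [P.val_castLE, aeval_X]

theorem holds_add_self_cons_iff (i : Fin P.n) (K : Type) [CommRing K] (y : Fin P.n → K) :
    (∀ eq ∈ Eqn.add i i i :: P.eqs, eq.Holds y) ↔
      ∃ x : Fin p → K, y = (fun j => aeval x (P.val j)) ∧ aeval x (P.val i) = 0 := by
  rw [List.forall_mem_cons, P.holds_iff, Eqn.Holds, add_eq_left]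
  constructor
  · rintro ⟨h0, x, rfl⟩
    exact ⟨x, rfl, h0⟩
  · rintro ⟨x, rfl, h0⟩
    exact ⟨h0, x, rfl⟩

def equivZeros (i : Fin P.n) (K : Type) [CommRing K] :
    {y : Fin P.n → K // ∀ eq ∈ Eqn.add i i i :: P.eqs, eq.Holds y} ≃
      {x : Fin p → K // aeval x (P.val i) = 0} where
  toFun y := ⟨fun j => y.1 (Fin.castLE P.le j), by
    obtain ⟨x, hy, hx⟩ := (P.holds_add_self_cons_iff i K y.1).1 y.2
    simpa only [hy, P.eval_castLE] using hx⟩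
  invFun x :=
    ⟨fun j => aeval x.1 (P.val j), (P.holds_add_self_cons_iff i K _).2 ⟨x.1, rfl, x.2⟩⟩
  left_inv y := by
    obtain ⟨x, hy, -⟩ := (P.holds_add_self_cons_iff i K y.1).1 y.2
    ext1
    simp only [hy, P.eval_castLE]
  right_inv x := Subtype.ext (P.eval_castLE x.1)

end Presentation

end

theorem stmt_9 (p : ℕ) (D : MvPolynomial (Fin p) ℤ) :
    ∃ (n : ℕ) (hpn : p ≤ n) (S : List (Eqn n)),
      ∀ (K : Type) [CommRing K] [CharZero K],
        ∃ e : {y : Fin n → K // ∀ eq ∈ S, eq.Holds y} ≃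
              {x : Fin p → K // MvPolynomial.aeval x D = 0},
          ∀ y, (e y : Fin p → K) = fun i => (y : Fin n → K) (Fin.castLE hpn i) := by
  obtain ⟨P, i, rfl⟩ := Presentation.exists_mem_range_val D
  exact ⟨P.n, P.le, Eqn.add i i i :: P.eqs, fun K _ _ => ⟨P.equivZeros i K, fun _ => rfl⟩⟩
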